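/- Let A be a nonsingular M-tensor (A = sI − B with B ≥ 0 entrywise and s > ρ(B)) and b ≥ 0 in R^n. Then the tensor equation A x^{m-1} = b has a minimal nonnegative solution, i.e., a nonnegative solution x* such that x* ≤ y for every nonnegative solution y. -/

import Mathlib

open Finset Filter

noncomputable section

/-- Action of an order-(p+1) tensor (p trailing indices):
`(A x^{p})_i = ∑ a_{i i₂ … i_{p+1}} x_{i₂} ⋯ x_{i_{p+1}}`. -/
def tapp (p n : ℕ) (A : Fin n → (Fin p → Fin n) → ℝ) (x : Fin n → ℝ) : Fin n → ℝ :=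
  fun i => ∑ js : Fin p → Fin n, A i js * ∏ j, x (js j)

/-- A `Z`-tensor: all off-diagonal entries are nonpositive. -/
def IsZTensor (p n : ℕ) (A : Fin n → (Fin p → Fin n) → ℝ) : Prop :=
  ∀ i js, (∃ j, js j ≠ i) → A i js ≤ 0

/-- The identity tensor. -/
def identT (p n : ℕ) : Fin n → (Fin p → Fin n) → ℝ :=
  fun i js => if ∀ j, js j = i then 1 else 0

/-- Spectral radius of a tensor: sup of moduli of (real) eigenvalues. -/
def tensorSpecRad (p n : ℕ) (B : Fin n → (Fin p → Fin n) → ℝ) : ℝ :=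
  sSup {r : ℝ | ∃ lam : ℝ, ∃ x : Fin n → ℝ, x ≠ 0 ∧
    (∀ i, tapp p n B x i = lam * x i ^ p) ∧ r = |lam|}

/-- A nonsingular M-tensor: `A = s I − B` with `B ≥ 0` and `s > ρ(B)`. -/
def IsMTensor (p n : ℕ) (A : Fin n → (Fin p → Fin n) → ℝ) : Prop :=
  ∃ s : ℝ, ∃ B : Fin n → (Fin p → Fin n) → ℝ,
    (∀ i js, 0 ≤ B i js) ∧ tensorSpecRad p n B < s ∧
    ∀ i js, A i js = s * identT p n i js - B i js

/-- The diagonal-part tensor of `A`. -/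
def diagT (p n : ℕ) (A : Fin n → (Fin p → Fin n) → ℝ) : Fin n → (Fin p → Fin n) → ℝ :=
  fun i js => if ∀ j, js j = i then A i (fun _ => i) else 0

/-- The majorization matrix of `A`: `M_{ij} = a_{i j … j}`. -/
def majMatrix (p n : ℕ) (A : Fin n → (Fin p → Fin n) → ℝ) : Matrix (Fin n) (Fin n) ℝ :=
  fun i j => A i (fun _ => j)

/-- The "mixed index" part `N = M_tensor − A`: zero on constant trailing tuples,
`−A` elsewhere. -/
def NPart (p n : ℕ) (A : Fin n → (Fin p → Fin n) → ℝ) : Fin n → (Fin p → Fin n) → ℝ :=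
  fun i js => if ∀ j' j'', js j' = js j'' then 0 else -A i js

/-- A nonsingular M-matrix: a Z-matrix with `M y > 0` for some `y > 0`. -/
def IsMMatrix (n : ℕ) (P : Matrix (Fin n) (Fin n) ℝ) : Prop :=
  (∀ i j, i ≠ j → P i j ≤ 0) ∧ ∃ y : Fin n → ℝ, (∀ i, 0 < y i) ∧ ∀ i, 0 < P.mulVec y i

/-- Spectral radius of a real matrix (via its complex spectrum). -/
def matSpecRad (n : ℕ) (J : Matrix (Fin n) (Fin n) ℝ) : ℝ :=
  sSup {r : ℝ | ∃ μ ∈ spectrum ℂ (J.map (Complex.ofReal ·)), r = ‖μ‖}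

/-- Irreducibility of a matrix. -/
def MatIrreducible (n : ℕ) (J : Matrix (Fin n) (Fin n) ℝ) : Prop :=
  ∀ S : Finset (Fin n), S.Nonempty → S ≠ Finset.univ → ∃ i ∈ S, ∃ j, j ∉ S ∧ J i j ≠ 0


/-! The nonnegative solutions of `A x^{m-1} = b` are the nonnegative fixed points of the monotone
map `x ↦ ((B x^{m-1} + b) / s)^{1/(m-1)}`, so, as in the Knaster–Tarski theorem, the infimum of
its nonnegative pre-fixed points is the minimal solution as soon as one pre-fixed point exists.
A large multiple of a positive `v` with `B v^{m-1} < s v^{[m-1]}` is one. Such a `v` exists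
because `s > ρ(B)`: otherwise the Perron eigenvalues of the positive tensors `B + ε` would all
be `≥ s`, and a limit of their eigenpairs would be an eigenpair of `B` with eigenvalue `≥ s`. -/

open Topology

theorem exists_fixedPoint_isLeast_of_monotoneOn {α : Type*} [ConditionallyCompleteLattice α]
    {f : α → α} {a w : α} (hf : MonotoneOn f (Set.Ici a))
    (hfa : Set.MapsTo f (Set.Ici a) (Set.Ici a)) (hw : a ≤ w) (hfw : f w ≤ w) :
    ∃ x, f x = x ∧ IsLeast {y | a ≤ y ∧ f y ≤ y} x := by
  set S := {y | a ≤ y ∧ f y ≤ y}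
  have hS : S.Nonempty := ⟨w, hw, hfw⟩
  have hSbdd : BddBelow S := ⟨a, fun _ hy => hy.1⟩
  have hax : a ≤ sInf S := le_csInf hS fun _ hy => hy.1
  have hfx : f (sInf S) ≤ sInf S :=
    le_csInf hS fun y hy => (hf hax hy.1 (csInf_le hSbdd hy)).trans hy.2
  have hxS : sInf S ∈ S := ⟨hax, hfx⟩
  have hfxS : f (sInf S) ∈ S := ⟨hfa hax, hf (hfa hax) hax hfx⟩
  exact ⟨sInf S, le_antisymm hfx (csInf_le hSbdd hfxS), hxS, fun _ hy => csInf_le hSbdd hy⟩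

theorem exists_least_nonneg_solution_eq_pow {ι : Type*} {p : ℕ} (hp : p ≠ 0)
    {Φ : (ι → ℝ) → ι → ℝ} (hΦ : MonotoneOn Φ (Set.Ici 0))
    (hΦ0 : Set.MapsTo Φ (Set.Ici 0) (Set.Ici 0)) {w : ι → ℝ} (hw : 0 ≤ w)
    (hΦw : Φ w ≤ w ^ p) :
    ∃ x, 0 ≤ x ∧ Φ x = x ^ p ∧ ∀ y, 0 ≤ y → Φ y = y ^ p → x ≤ y := by
  set F : (ι → ℝ) → ι → ℝ := fun x i => Φ x i ^ (p⁻¹ : ℝ)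
  have hF : MonotoneOn F (Set.Ici 0) := fun x hx y hy hxy i =>
    Real.rpow_le_rpow (hΦ0 hx i) (hΦ hx hy hxy i) (by positivity)
  have hF0 : Set.MapsTo F (Set.Ici 0) (Set.Ici 0) := fun x hx i =>
    Real.rpow_nonneg (hΦ0 hx i) _
  have hF_of_eq : ∀ y, 0 ≤ y → Φ y = y ^ p → F y = y := fun y hy hΦy => funext fun i => by
    simp only [F, hΦy, Pi.pow_apply, Real.pow_rpow_inv_natCast (hy i) hp]
  have hFw : F w ≤ w := fun i =>
    calc F w i ≤ (w i ^ p) ^ (p⁻¹ : ℝ) :=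
          Real.rpow_le_rpow (hΦ0 hw i) (hΦw i) (by positivity)
      _ = w i := Real.pow_rpow_inv_natCast (hw i) hp
  obtain ⟨x, hFx, hxS, hx_least⟩ := exists_fixedPoint_isLeast_of_monotoneOn hF hF0 hw hFw
  refine ⟨x, hxS.1, funext fun i => ?_, fun y hy hΦy => hx_least ⟨hy, (hF_of_eq y hy hΦy).le⟩⟩
  rw [Pi.pow_apply, ← congrFun hFx i, Real.rpow_inv_natCast_pow (hΦ0 hxS.1 i) hp]

lemma ne_zero_of_mem_stdSimplex {ι : Type*} [Fintype ι] {y : ι → ℝ}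
    (hy : y ∈ stdSimplex ℝ ι) : y ≠ 0 := by
  rintro rfl
  simpa using hy.2

lemma inv_sum_smul_mem_stdSimplex {ι : Type*} [Fintype ι] {y : ι → ℝ} (hy : 0 ≤ y) (hy0 : y ≠ 0) :
    (∑ j, y j)⁻¹ • y ∈ stdSimplex ℝ ι := by
  have hsum : 0 < ∑ j, y j := by
    obtain ⟨k, hk⟩ := Function.ne_iff.mp hy0
    exact sum_pos' (fun j _ => hy j) ⟨k, mem_univ k, (hy k).lt_of_ne' hk⟩
  refine ⟨fun j => smul_nonneg (inv_nonneg.mpr hsum.le) (hy j), ?_⟩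
  simp only [Pi.smul_apply, smul_eq_mul, ← mul_sum, inv_mul_cancel₀ hsum.ne']

def entrySum (p n : ℕ) (B : Fin n → (Fin p → Fin n) → ℝ) : ℝ :=
  ∑ i, ∑ js, B i js

section TensorAction

variable {p n : ℕ}

lemma tapp_nonneg {B : Fin n → (Fin p → Fin n) → ℝ} (hB : ∀ i js, 0 ≤ B i js)
    {x : Fin n → ℝ} (hx : 0 ≤ x) : 0 ≤ tapp p n B x := fun i =>
  sum_nonneg fun js _ => mul_nonneg (hB i js) (prod_nonneg fun j _ => hx (js j))

lemma tapp_monotoneOn {B : Fin n → (Fin p → Fin n) → ℝ} (hB : ∀ i js, 0 ≤ B i js) :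
    MonotoneOn (tapp p n B) (Set.Ici 0) := fun _ hx _ _ hxy i =>
  sum_le_sum fun js _ => mul_le_mul_of_nonneg_left
    (prod_le_prod (fun j _ => hx (js j)) fun j _ => hxy (js j)) (hB i js)

lemma tapp_zero (hp : p ≠ 0) (B : Fin n → (Fin p → Fin n) → ℝ) : tapp p n B 0 = 0 := by
  funext i
  simp [tapp, hp]

lemma tapp_lt_tapp_of_pos (hp : p ≠ 0) {C : Fin n → (Fin p → Fin n) → ℝ}
    (hC : ∀ i js, 0 < C i js) {x y : Fin n → ℝ} (hx : 0 ≤ x) (hxy : x ≤ y) {k : Fin n}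
    (hk : x k < y k) (i : Fin n) : tapp p n C x i < tapp p n C y i := by
  refine sum_lt_sum (fun js _ => mul_le_mul_of_nonneg_left
    (prod_le_prod (fun j _ => hx (js j)) fun j _ => hxy (js j)) (hC i js).le)
    ⟨fun _ => k, mem_univ _, mul_lt_mul_of_pos_left ?_ (hC i _)⟩
  simpa only [prod_const, card_univ, Fintype.card_fin] using pow_lt_pow_left₀ hk (hx k) hp

@[fun_prop]
lemma continuous_tapp (B : Fin n → (Fin p → Fin n) → ℝ) : Continuous (tapp p n B) := by
  unfold tapp
  fun_prop

lemma tapp_smul (B : Fin n → (Fin p → Fin n) → ℝ) (a : ℝ) (x : Fin n → ℝ) :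
    tapp p n B (a • x) = a ^ p • tapp p n B x := by
  funext i
  simp only [tapp, Pi.smul_apply, smul_eq_mul, prod_mul_distrib, prod_const, card_univ,
    Fintype.card_fin, mul_sum]
  exact sum_congr rfl fun _ _ => by ring

lemma tapp_add_const (B : Fin n → (Fin p → Fin n) → ℝ) (c : ℝ) (x : Fin n → ℝ) (i : Fin n) :
    tapp p n (fun i js => B i js + c) x i = tapp p n B x i + c * (∑ j, x j) ^ p := by
  simp only [tapp, add_mul, sum_add_distrib, ← mul_sum, Fintype.sum_pow]

lemma tapp_smul_identT_sub (s : ℝ) (B : Fin n → (Fin p → Fin n) → ℝ) (x : Fin n → ℝ) :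
    tapp p n (fun i js => s * identT p n i js - B i js) x = s • x ^ p - tapp p n B x := by
  funext i
  have hI : ∑ js : Fin p → Fin n, identT p n i js * ∏ j, x (js j) = x i ^ p := by
    rw [sum_eq_single (fun _ => i)]
    · simp [identT]
    · intro js _ hjs
      have : ¬ ∀ j, js j = i := fun h => hjs (funext h)
      simp [identT, this]
    · simp
  simp only [tapp, sub_mul, mul_assoc, sum_sub_distrib, ← mul_sum, hI, Pi.sub_apply,
    Pi.smul_apply, Pi.pow_apply, smul_eq_mul]

end TensorAction

section Perron

variable {p n : ℕ}

lemma abs_tapp_le {B : Fin n → (Fin p → Fin n) → ℝ} (hB : ∀ i js, 0 ≤ B i js)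
    {x : Fin n → ℝ} {c : ℝ} (hx : ∀ j, |x j| ≤ c) (i : Fin n) :
    |tapp p n B x i| ≤ (∑ js, B i js) * c ^ p := by
  rw [sum_mul]
  refine (abs_sum_le_sum_abs _ _).trans (sum_le_sum fun js _ => ?_)
  rw [abs_mul, abs_of_nonneg (hB i js), abs_prod]
  refine mul_le_mul_of_nonneg_left ?_ (hB i js)
  calc ∏ j, |x (js j)| ≤ ∏ _j : Fin p, c :=
        prod_le_prod (fun j _ => abs_nonneg _) fun j _ => hx (js j)
    _ = c ^ p := by rw [prod_const, card_univ, Fintype.card_fin]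

lemma le_entrySum_of_mul_pow_le {B : Fin n → (Fin p → Fin n) → ℝ} (hB : ∀ i js, 0 ≤ B i js)
    {x : Fin n → ℝ} (hx : x ≠ 0) {t : ℝ} (ht : ∀ i, t * |x i| ^ p ≤ |tapp p n B x i|) :
    t ≤ entrySum p n B := by
  obtain ⟨k, hxk⟩ := Function.ne_iff.mp hx
  have : Nonempty (Fin n) := ⟨k⟩
  obtain ⟨i, hi⟩ := Finite.exists_max fun j => |x j|
  have hxi : 0 < |x i| ^ p := pow_pos ((abs_pos.mpr hxk).trans_le (hi k)) p
  have hrow : ∑ js, B i js ≤ entrySum p n B :=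
    single_le_sum (f := fun i => ∑ js, B i js) (fun i _ => sum_nonneg fun js _ => hB i js)
      (mem_univ i)
  refine le_of_mul_le_mul_right ?_ hxi
  calc t * |x i| ^ p ≤ |tapp p n B x i| := ht i
    _ ≤ (∑ js, B i js) * |x i| ^ p := abs_tapp_le hB hi i
    _ ≤ entrySum p n B * |x i| ^ p := by gcongr

lemma le_entrySum_of_subeigen {B : Fin n → (Fin p → Fin n) → ℝ} (hB : ∀ i js, 0 ≤ B i js)
    {y : Fin n → ℝ} (hy : y ∈ stdSimplex ℝ (Fin n)) {t : ℝ}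
    (ht : ∀ i, t * y i ^ p ≤ tapp p n B y i) : t ≤ entrySum p n B := by
  refine le_entrySum_of_mul_pow_le hB (ne_zero_of_mem_stdSimplex hy) fun i => ?_
  rw [abs_of_nonneg (hy.1 i), abs_of_nonneg (tapp_nonneg hB hy.1 i)]
  exact ht i

lemma abs_le_tensorSpecRad {B : Fin n → (Fin p → Fin n) → ℝ} (hB : ∀ i js, 0 ≤ B i js)
    {lam : ℝ} {x : Fin n → ℝ} (hx : x ≠ 0) (heig : ∀ i, tapp p n B x i = lam * x i ^ p) :
    |lam| ≤ tensorSpecRad p n B := by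
  refine le_csSup ⟨entrySum p n B, ?_⟩ ⟨lam, x, hx, heig, rfl⟩
  rintro _ ⟨lam', x', hx', heig', rfl⟩
  exact le_entrySum_of_mul_pow_le hB hx' fun i => by rw [heig', abs_mul, abs_pow]

lemma tensorSpecRad_nonneg (B : Fin n → (Fin p → Fin n) → ℝ) : 0 ≤ tensorSpecRad p n B :=
  Real.sSup_nonneg fun _ ⟨_, _, _, _, hr⟩ => hr ▸ abs_nonneg _

lemma subeigen_smul {C : Fin n → (Fin p → Fin n) → ℝ} {t : ℝ} {y : Fin n → ℝ}
    (hy : ∀ i, t * y i ^ p ≤ tapp p n C y i) {a : ℝ} (ha : 0 ≤ a) (i : Fin n) :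
    t * (a • y) i ^ p ≤ tapp p n C (a • y) i := by
  rw [tapp_smul, Pi.smul_apply, Pi.smul_apply, smul_eq_mul, smul_eq_mul, mul_pow,
    mul_left_comm]
  exact mul_le_mul_of_nonneg_left (hy i) (pow_nonneg ha p)

/-- Raising `y k` a little makes every inequality strict, as `C` is positive; then `lam` itself
can be raised. -/
lemma exists_gt_subeigen_of_pos (hp : p ≠ 0) {C : Fin n → (Fin p → Fin n) → ℝ}
    (hC : ∀ i js, 0 < C i js) {lam : ℝ} {y : Fin n → ℝ} (hy : 0 ≤ y)
    (hsub : ∀ i, lam * y i ^ p ≤ tapp p n C y i) {k : Fin n}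
    (hk : lam * y k ^ p < tapp p n C y k) :
    ∃ t > lam, ∃ z : Fin n → ℝ, 0 ≤ z ∧ z ≠ 0 ∧ ∀ i, t * z i ^ p ≤ tapp p n C z i := by
  have hd : ∀ᶠ d in 𝓝[>] (0 : ℝ), lam * (y k + d) ^ p < tapp p n C y k := by
    have hcont : Tendsto (fun d : ℝ => lam * (y k + d) ^ p) (𝓝 0) (𝓝 (lam * y k ^ p)) := by
      simpa using (by fun_prop : Continuous fun d : ℝ => lam * (y k + d) ^ p).tendsto 0
    exact (hcont.eventually_lt_const hk).filter_mono nhdsWithin_le_nhds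
  obtain ⟨d, hdk, hd0⟩ := (hd.and self_mem_nhdsWithin).exists
  set z := y + Pi.single k d
  have hyz : y ≤ z := le_add_of_nonneg_right (Pi.single_nonneg.mpr (le_of_lt hd0))
  have hzk : z k = y k + d := by simp [z]
  have hz : 0 ≤ z := hy.trans hyz
  have hCyz : ∀ i, tapp p n C y i < tapp p n C z i :=
    tapp_lt_tapp_of_pos hp hC hy hyz (k := k) (by rw [hzk]; linarith [hd0])
  have hstrict : ∀ i, lam * z i ^ p < tapp p n C z i := by
    intro i
    by_cases hik : i = k
    · subst hik
      exact hzk ▸ hdk.trans (hCyz i)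
    · have hzi : z i = y i := by simp [z, hik]
      exact hzi ▸ (hsub i).trans_lt (hCyz i)
  have ht : ∀ᶠ t in 𝓝[>] lam, ∀ i, t * z i ^ p < tapp p n C z i :=
    (Filter.eventually_all.mpr fun i => Filter.Tendsto.eventually_lt_const (hstrict i)
      ((continuous_id.mul continuous_const).tendsto lam)).filter_mono nhdsWithin_le_nhds
  obtain ⟨t, hzt, hlt⟩ := (ht.and self_mem_nhdsWithin).exists
  have hzk0 : 0 < z k := hzk ▸ add_pos_of_nonneg_of_pos (hy k) hd0
  exact ⟨t, hlt, z, hz, Function.ne_iff.mpr ⟨k, hzk0.ne'⟩, fun i => (hzt i).le⟩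

/-- Perron's theorem for positive tensors: a maximizer of the Collatz–Wielandt value over the
simplex is an eigenvector. -/
theorem exists_eigenpair_of_pos [NeZero n] (hp : p ≠ 0) {C : Fin n → (Fin p → Fin n) → ℝ}
    (hC : ∀ i js, 0 < C i js) :
    ∃ lam : ℝ, ∃ y ∈ stdSimplex ℝ (Fin n), (∀ i, 0 < y i) ∧
      ∀ i, tapp p n C y i = lam * y i ^ p := by
  have hC0 : ∀ i js, 0 ≤ C i js := fun i js => (hC i js).le
  set K : Set (ℝ × (Fin n → ℝ)) :=
    (Set.Icc 0 (entrySum p n C) ×ˢ stdSimplex ℝ (Fin n)) ∩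
      {q | ∀ i, q.1 * q.2 i ^ p ≤ tapp p n C q.2 i}
  have hK : IsCompact K := by
    refine (isCompact_Icc.prod (isCompact_stdSimplex ℝ _)).inter_right ?_
    simp only [Set.ofPred_forall]
    exact isClosed_iInter fun i => isClosed_le (by fun_prop) (by fun_prop)
  set e : Fin n → ℝ := Pi.single 0 1
  have he : e ∈ stdSimplex ℝ (Fin n) := single_mem_stdSimplex ℝ 0
  have he_sub : ∀ i, 0 * e i ^ p ≤ tapp p n C e i :=
    fun i => by simpa using tapp_nonneg hC0 he.1 i
  have hK0 : (0, e) ∈ K :=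
    ⟨⟨⟨le_rfl, le_entrySum_of_subeigen hC0 he he_sub⟩, he⟩, he_sub⟩
  obtain ⟨⟨lam, y⟩, hmem, hmax⟩ := hK.exists_isMaxOn ⟨_, hK0⟩ continuous_fst.continuousOn
  obtain ⟨⟨hlam, hy⟩, hsub⟩ : (lam ∈ Set.Icc 0 (entrySum p n C) ∧ y ∈ stdSimplex ℝ (Fin n)) ∧
    ∀ i, lam * y i ^ p ≤ tapp p n C y i := hmem
  have heig : ∀ i, tapp p n C y i = lam * y i ^ p := by
    by_contra! h
    obtain ⟨k, hk⟩ := h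
    obtain ⟨t, hlt, z, hz, hz0, hzt⟩ :=
      exists_gt_subeigen_of_pos hp hC hy.1 hsub ((hsub k).lt_of_ne' hk)
    have hz' := inv_sum_smul_mem_stdSimplex hz hz0
    have hzt' := subeigen_smul hzt (inv_nonneg.mpr (Fintype.sum_nonneg hz))
    have hmem : (t, (∑ j, z j)⁻¹ • z) ∈ K :=
      ⟨⟨⟨hlam.1.trans hlt.le, le_entrySum_of_subeigen hC0 hz' hzt'⟩, hz'⟩, hzt'⟩
    exact absurd (isMaxOn_iff.mp hmax _ hmem) (not_le.mpr hlt)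
  obtain ⟨k, hk⟩ := Function.ne_iff.mp (ne_zero_of_mem_stdSimplex hy)
  refine ⟨lam, y, hy, fun i => (hy.1 i).lt_of_ne' fun hyi => ?_, heig⟩
  have hpos := tapp_lt_tapp_of_pos hp hC le_rfl hy.1 ((hy.1 k).lt_of_ne' hk) i
  rw [tapp_zero hp, Pi.zero_apply, heig, hyi, zero_pow hp, mul_zero] at hpos
  exact lt_irrefl _ hpos

end Perron

section Supersolution

variable {p n : ℕ}

/-- If no positive vector is a strict supersolution for `s`, the Perron eigenpairs of the positive
perturbations `B + 1/(k+1)` have eigenvalues `≥ s` and accumulate at an eigenpair of `B`. -/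
lemma exists_eigenpair_ge_of_forall_exists_le [NeZero n] (hp : p ≠ 0)
    {B : Fin n → (Fin p → Fin n) → ℝ} (hB : ∀ i js, 0 ≤ B i js) {s : ℝ}
    (hs : ∀ v : Fin n → ℝ, (∀ i, 0 < v i) → ∃ i, s * v i ^ p ≤ tapp p n B v i) :
    ∃ lam, s ≤ lam ∧ ∃ y ∈ stdSimplex ℝ (Fin n), ∀ i, tapp p n B y i = lam * y i ^ p := by
  set ε : ℕ → ℝ := fun k => 1 / ((k : ℝ) + 1)
  have hε0 : ∀ k, 0 < ε k := fun k => by positivity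
  choose lam y hy hypos heig using fun k =>
    exists_eigenpair_of_pos hp (C := fun i js => B i js + ε k) fun i js => by
      have := hB i js; have := hε0 k; positivity
  have hshift : ∀ k i, tapp p n B (y k) i + ε k = lam k * y k i ^ p := fun k i => by
    rw [← heig, tapp_add_const, (hy k).2, one_pow, mul_one]
  have hlam_ge : ∀ k, s ≤ lam k := fun k => by
    obtain ⟨i, hi⟩ := hs (y k) (hypos k)
    refine le_of_mul_le_mul_right ?_ (pow_pos (hypos k i) p)
    linarith [hshift k i, hε0 k]
  have hlam_le : ∀ k, lam k ≤ entrySum p n fun i js => B i js + 1 := fun k => by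
    refine (le_entrySum_of_subeigen (fun i js => by have := hB i js; have := hε0 k; positivity)
      (hy k) fun i => (heig k i).ge).trans (sum_le_sum fun i _ => sum_le_sum fun js _ => ?_)
    have : ε k ≤ 1 := div_le_one_of_le₀ (by linarith [(k.cast_nonneg : (0 : ℝ) ≤ k)])
      (by positivity)
    linarith
  obtain ⟨⟨lam₀, y₀⟩, ⟨hlam₀, hy₀⟩, φ, hφ, hlim⟩ :=
    (isCompact_Icc.prod (isCompact_stdSimplex ℝ (Fin n))).tendsto_subseq
      fun k => (⟨⟨hlam_ge k, hlam_le k⟩, hy k⟩ :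
        (lam k, y k) ∈ Set.Icc s _ ×ˢ stdSimplex ℝ (Fin n))
  refine ⟨lam₀, hlam₀.1, y₀, hy₀, fun i => ?_⟩
  have hgap : Tendsto (fun k => ε (φ k)) atTop (𝓝 (lam₀ * y₀ i ^ p - tapp p n B y₀ i)) := by
    have hcont : Continuous fun q : ℝ × (Fin n → ℝ) => q.1 * q.2 i ^ p - tapp p n B q.2 i :=
      by fun_prop
    refine ((hcont.tendsto _).comp hlim).congr fun k => ?_
    simp only [Function.comp_apply, ← hshift]
    ring
  have hε : Tendsto (fun k => ε (φ k)) atTop (𝓝 0) :=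
    tendsto_one_div_add_atTop_nhds_zero_nat.comp hφ.tendsto_atTop
  linarith [tendsto_nhds_unique hgap hε]

theorem exists_pos_lt_of_tensorSpecRad_lt [NeZero n] (hp : p ≠ 0)
    {B : Fin n → (Fin p → Fin n) → ℝ} (hB : ∀ i js, 0 ≤ B i js) {s : ℝ}
    (hs : tensorSpecRad p n B < s) :
    ∃ v : Fin n → ℝ, (∀ i, 0 < v i) ∧ ∀ i, tapp p n B v i < s * v i ^ p := by
  by_contra! h
  obtain ⟨lam, hslam, y, hy, heig⟩ := exists_eigenpair_ge_of_forall_exists_le hp hB h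
  linarith [abs_le_tensorSpecRad hB (ne_zero_of_mem_stdSimplex hy) heig, le_abs_self lam]

lemma exists_supersolution (hp : p ≠ 0) {B : Fin n → (Fin p → Fin n) → ℝ} {s : ℝ}
    {v : Fin n → ℝ} (hv : ∀ i, 0 < v i) (hBv : ∀ i, tapp p n B v i < s * v i ^ p)
    (b : Fin n → ℝ) : ∃ w, 0 ≤ w ∧ tapp p n B w + b ≤ s • w ^ p := by
  obtain ⟨T, hT⟩ := Finite.exists_le fun i => b i / (s * v i ^ p - tapp p n B v i)
  set t := max T 1
  have htp : T ≤ t ^ p := (le_max_left T 1).trans (le_self_pow₀ (le_max_right T 1) hp)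
  refine ⟨t • v, smul_nonneg (by positivity) fun i => (hv i).le, fun i => ?_⟩
  have hgap := sub_pos.mpr (hBv i)
  have hbi : b i ≤ t ^ p * (s * v i ^ p - tapp p n B v i) :=
    (div_le_iff₀ hgap).mp ((hT i).trans htp)
  simp only [tapp_smul, Pi.add_apply, Pi.smul_apply, Pi.pow_apply, smul_eq_mul, mul_pow]
  linarith

end Supersolution

/-- a nonsingular M-tensor equation with `b ≥ 0` has a minimal
nonnegative solution. -/
theorem stmt2 (m n : ℕ) (hm : 2 ≤ m) (A : Fin n → (Fin (m-1) → Fin n) → ℝ)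
    (hA : IsMTensor (m-1) n A) (b : Fin n → ℝ) (hb : 0 ≤ b) :
    ∃ xs : Fin n → ℝ, 0 ≤ xs ∧ tapp (m-1) n A xs = b ∧
      ∀ y : Fin n → ℝ, 0 ≤ y → tapp (m-1) n A y = b → xs ≤ y := by
  have hp : m - 1 ≠ 0 := by omega
  rcases Nat.eq_zero_or_pos n with rfl | hn
  · exact ⟨0, le_rfl, funext (·.elim0), fun _ _ _ i => i.elim0⟩
  have : NeZero n := ⟨hn.ne'⟩
  obtain ⟨s, B, hB, hρ, hAeq⟩ := hA
  have hs : 0 < s := (tensorSpecRad_nonneg B).trans_lt hρ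
  have hA : A = fun i js => s * identT (m-1) n i js - B i js := funext₂ hAeq
  have hsol : ∀ y, tapp (m-1) n A y = b ↔ s⁻¹ • (tapp (m-1) n B y + b) = y ^ (m-1) := fun y => by
    rw [hA, tapp_smul_identT_sub, sub_eq_iff_eq_add', inv_smul_eq_iff₀ hs.ne', eq_comm]
  obtain ⟨v, hv, hBv⟩ := exists_pos_lt_of_tensorSpecRad_lt hp hB hρ
  obtain ⟨w, hw, hBw⟩ := exists_supersolution hp hv hBv b
  obtain ⟨xs, hxs, hxs_sol, hxs_min⟩ := exists_least_nonneg_solution_eq_pow hp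
    (Φ := fun y => s⁻¹ • (tapp (m-1) n B y + b))
    (fun x hx y hy hxy => smul_le_smul_of_nonneg_left
      (add_le_add_left (tapp_monotoneOn hB hx hy hxy) b) (inv_nonneg.mpr hs.le))
    (fun x hx => smul_nonneg (inv_nonneg.mpr hs.le) (add_nonneg (tapp_nonneg hB hx) hb))
    hw ((inv_smul_le_iff_of_pos hs).mpr hBw)
  exact ⟨xs, hxs, (hsol xs).mpr hxs_sol, fun y hy hyb => hxs_min y hy ((hsol y).mp hyb)⟩

end
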